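/- Let Π ∈ S_d^{++}(ℝ) and κ ∈ (0, l_min(Π)/2) be such that ξ^* Π A(ρ) ξ ≥ κ ξ^*ξ for all ξ ∈ ℝ^d and ρ ∈ D. Then for every ε > 0, the regularized function Π A_ε is uniformly coercive on (ℝ_+)^d with the same coefficient κ: ξ^* Π A_ε(ρ) ξ ≥ κ ξ^*ξ for all ξ ∈ ℝ^d and ρ ∈ (ℝ_+)^d. -/

import Mathlib

open Matrix Finset

lemma rayleigh {d : ℕ} (P : Matrix (Fin d) (Fin d) ℝ) (hP : P.IsHermitian)
    (l : ℝ) (hl : ∀ i, l ≤ hP.eigenvalues i) (ξ : Fin d → ℝ) :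
    l * (ξ ⬝ᵥ ξ) ≤ ξ ⬝ᵥ P.mulVec ξ := by
  set U : Matrix (Fin d) (Fin d) ℝ := (hP.eigenvectorUnitary : Matrix (Fin d) (Fin d) ℝ) with hU
  have hstar : star U = Uᵀ := by
    ext i j; simp [Matrix.star_apply]
  set y : Fin d → ℝ := Uᵀ *ᵥ ξ with hy
  have hUU : U * Uᵀ = 1 := by
    rw [← hstar]; exact (Matrix.mem_unitaryGroup_iff).mp hP.eigenvectorUnitary.2
  have key : ξ ⬝ᵥ P.mulVec ξ = ∑ i, hP.eigenvalues i * (y i)^2 := by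
    conv_lhs => rw [hP.spectral_theorem, Unitary.conjStarAlgAut_apply, ← hU, hstar]
    rw [← Matrix.mulVec_mulVec, ← Matrix.mulVec_mulVec, Matrix.dotProduct_mulVec ξ U,
      ← Matrix.mulVec_transpose]
    simp only [← hy, Matrix.mulVec_diagonal, dotProduct]
    apply Finset.sum_congr rfl
    intro i _
    simp [Function.comp]
    ring
  have keys : ξ ⬝ᵥ ξ = ∑ i, (y i)^2 := by
    have : y ⬝ᵥ y = ξ ⬝ᵥ ξ := by
      rw [hy, Matrix.dotProduct_mulVec _ Uᵀ ξ, Matrix.vecMul_transpose,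
        Matrix.mulVec_mulVec, hUU, Matrix.one_mulVec]
    rw [← this, dotProduct]
    exact Finset.sum_congr rfl fun i _ => (sq (y i)).symm
  rw [key, keys, Finset.mul_sum]
  exact Finset.sum_le_sum fun i _ => mul_le_mul_of_nonneg_right (hl i) (sq_nonneg _)


/-- The matrix `M(ρ)` from the paper. -/
noncomputable def Mmat {d : ℕ} (lam : Fin d → ℝ) (ρ : Fin d → ℝ) :
    Matrix (Fin d) (Fin d) ℝ :=
  Matrix.of fun i j =>
    if i = j then
      ((∑ l ∈ Finset.univ.erase i, lam l * ρ l) *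
        (∑ l ∈ Finset.univ.erase i, (lam i - lam l) * ρ l)) / (∑ l, lam l * ρ l) ^ 2
    else
      (lam i * ρ i * (∑ l ∈ Finset.univ.erase j, (lam l - lam j) * ρ l)) /
        (∑ l, lam l * ρ l) ^ 2

/-- The matrix `A(ρ) = (1/2)(I + M(ρ))`. -/
noncomputable def Amat {d : ℕ} (lam : Fin d → ℝ) (ρ : Fin d → ℝ) :
    Matrix (Fin d) (Fin d) ℝ :=
  (1 / 2 : ℝ) • ((1 : Matrix (Fin d) (Fin d) ℝ) + Mmat lam ρ)

/-- The domain `D = (ℝ₊)^d \ {0}`. -/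
def Dset (d : ℕ) : Set (Fin d → ℝ) := {ρ | (∀ i, 0 ≤ ρ i) ∧ ρ ≠ 0}

/-- The regularized matrix `M_ε(ρ)`, with denominator `ε² ∨ (Σ_l λ_l ρ_l)²`. -/
noncomputable def Meps {d : ℕ} (lam : Fin d → ℝ) (ε : ℝ) (ρ : Fin d → ℝ) :
    Matrix (Fin d) (Fin d) ℝ :=
  Matrix.of fun i j =>
    if i = j then
      ((∑ l ∈ Finset.univ.erase i, lam l * ρ l) *
        (∑ l ∈ Finset.univ.erase i, (lam i - lam l) * ρ l)) /
        max (ε ^ 2) ((∑ l, lam l * ρ l) ^ 2)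
    else
      (lam i * ρ i * (∑ l ∈ Finset.univ.erase j, (lam l - lam j) * ρ l)) /
        max (ε ^ 2) ((∑ l, lam l * ρ l) ^ 2)

/-- The regularized matrix `A_ε(ρ) = (1/2)(I + M_ε(ρ))`. -/
noncomputable def Aeps {d : ℕ} (lam : Fin d → ℝ) (ε : ℝ) (ρ : Fin d → ℝ) :
    Matrix (Fin d) (Fin d) ℝ :=
  (1 / 2 : ℝ) • ((1 : Matrix (Fin d) (Fin d) ℝ) + Meps lam ε ρ)

theorem stmt18 {d : ℕ} (hd : 2 ≤ d) (lam : Fin d → ℝ) (hlam : ∀ i, 0 < lam i)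
    (P : Matrix (Fin d) (Fin d) ℝ) (hP : P.PosDef) (κ : ℝ) (hκ : 0 < κ)
    (hκ' : κ < (Finset.univ.inf' (Finset.univ_nonempty_iff.mpr ⟨⟨0, by omega⟩⟩)
        hP.1.eigenvalues) / 2)
    (hcoer : ∀ ξ : Fin d → ℝ, ∀ ρ ∈ Dset d,
      κ * (ξ ⬝ᵥ ξ) ≤ ξ ⬝ᵥ (P * Amat lam ρ).mulVec ξ)
    (ε : ℝ) (hε : 0 < ε) :
    ∀ ξ : Fin d → ℝ, ∀ ρ : Fin d → ℝ, (∀ i, 0 ≤ ρ i) →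
      κ * (ξ ⬝ᵥ ξ) ≤ ξ ⬝ᵥ (P * Aeps lam ε ρ).mulVec ξ := by
  intro ξ ρ hρ
  set l : ℝ := (Finset.univ.inf' (Finset.univ_nonempty_iff.mpr ⟨⟨0, by omega⟩⟩)
      hP.1.eigenvalues) with hl
  -- Rayleigh bound
  have hray : l * (ξ ⬝ᵥ ξ) ≤ ξ ⬝ᵥ P.mulVec ξ :=
    rayleigh P hP.1 l (fun i => Finset.inf'_le _ (Finset.mem_univ i)) ξ
  have hξξ : 0 ≤ ξ ⬝ᵥ ξ := Finset.sum_nonneg fun i _ => mul_self_nonneg (ξ i)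
  set S : ℝ := ∑ a, lam a * ρ a with hS
  have hSnn : 0 ≤ S := Finset.sum_nonneg fun i _ => mul_nonneg (hlam i).le (hρ i)
  set t : ℝ := S ^ 2 / max (ε ^ 2) (S ^ 2) with ht
  have hmaxpos : 0 < max (ε ^ 2) (S ^ 2) := lt_max_of_lt_left (pow_pos hε 2)
  have ht0 : 0 ≤ t := div_nonneg (sq_nonneg S) hmaxpos.le
  have ht1 : t ≤ 1 := div_le_one_of_le₀ (le_max_right _ _) hmaxpos.le
  have hMeq : Meps lam ε ρ = t • Mmat lam ρ := by
    ext i j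
    simp only [Meps, Mmat, Matrix.of_apply, Matrix.smul_apply, smul_eq_mul]
    rcases eq_or_ne S 0 with hS0 | hS0
    · have hz : ∀ i, ρ i = 0 := by
        intro i
        have := (Finset.sum_eq_zero_iff_of_nonneg
          (fun i _ => mul_nonneg (hlam i).le (hρ i))).mp hS0 i (Finset.mem_univ i)
        have := mul_eq_zero.mp this
        rcases this with h | h
        · exact absurd h (hlam i).ne'
        · exact h
      have hz1 : ∀ s : Finset (Fin d), ∑ l ∈ s, lam l * ρ l = 0 :=
        fun s => Finset.sum_eq_zero fun i _ => by rw [hz i, mul_zero]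
      split_ifs with h
      · rw [hz1]; ring
      · rw [hz i]; ring
    · have hmax : max (ε ^ 2) (S ^ 2) ≠ 0 := hmaxpos.ne'
      have hS2 : (S : ℝ) ^ 2 ≠ 0 := pow_ne_zero 2 hS0
      split_ifs with h <;> (rw [ht, ← hS, div_mul_div_comm, mul_comm (S ^ 2) _, mul_div_mul_right _ _ hS2])
  have hAeq : Aeps lam ε ρ = (1 - t) • ((1/2 : ℝ) • (1 : Matrix (Fin d) (Fin d) ℝ))
      + t • Amat lam ρ := by
    rw [Aeps, Amat, hMeq]
    module
  have expand : ξ ⬝ᵥ (P * Aeps lam ε ρ).mulVec ξ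
      = (1 - t) * ((1/2) * (ξ ⬝ᵥ P.mulVec ξ)) + t * (ξ ⬝ᵥ (P * Amat lam ρ).mulVec ξ) := by
    rw [hAeq, mul_add, Matrix.add_mulVec, dotProduct_add]
    congr 1
    · rw [Matrix.mul_smul, Matrix.mul_smul, Matrix.mul_one, smul_smul,
        Matrix.smul_mulVec, dotProduct_smul, smul_eq_mul]
      ring
    · rw [Matrix.mul_smul, Matrix.smul_mulVec, dotProduct_smul, smul_eq_mul]
  rw [expand]
  rcases eq_or_ne ρ 0 with hρ0 | hρ0
  · have : S = 0 := by rw [hS, hρ0]; simp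
    have ht00 : t = 0 := by rw [ht, this]; simp
    rw [ht00]
    have hq : κ * (ξ ⬝ᵥ ξ) ≤ (1/2) * (ξ ⬝ᵥ P.mulVec ξ) := by
      nlinarith [mul_nonneg (by linarith : (0:ℝ) ≤ l/2 - κ) hξξ]
    linarith
  · have hco := hcoer ξ ρ ⟨hρ, hρ0⟩
    have hq : κ * (ξ ⬝ᵥ ξ) ≤ (1/2) * (ξ ⬝ᵥ P.mulVec ξ) := by
      nlinarith [mul_nonneg (by linarith : (0:ℝ) ≤ l/2 - κ) hξξ]
    nlinarith [mul_le_mul_of_nonneg_left hco ht0,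
      mul_nonneg (by linarith : (0:ℝ) ≤ 1 - t) (by linarith : (0:ℝ) ≤ (1/2) * (ξ ⬝ᵥ P.mulVec ξ) - κ * (ξ ⬝ᵥ ξ))]
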